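/- arXiv:1611.08271 — 2 statements merged into one kernel-verified Lean document; each statement's English description precedes it below -/
import Mathlib

section
/- Let k ≥ 2 and j ≥ 0 be integers and let G be a thin spider S_t[H,k,j] with arbitrary head graph H on j vertices. Then (k+j+2 − √((k+j)²+4))/2 and (k+j+2 + √((k+j)²+4))/2 are eigenvalues of the Laplacian matrix L(G), each with multiplicity at least k−1 (in particular, each eigenspace has dimension at least k−1). -/
open SimpleGraph Polynomial

/-- Relation generating the edges of the thin spider `S_t[H,k,j]`: body `C = inl`,
legs `S = inr ∘ inl`, head `R = inr ∘ inr` carrying the head graph `H`. -/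
def thinSpiderRel (k j : ℕ) (H : SimpleGraph (Fin j)) :
    (Fin k ⊕ Fin k ⊕ Fin j) → (Fin k ⊕ Fin k ⊕ Fin j) → Prop := fun u v =>
  (∃ i m : Fin k, u = Sum.inl i ∧ v = Sum.inl m) ∨
  (∃ i : Fin k, u = Sum.inl i ∧ v = Sum.inr (Sum.inl i)) ∨
  (∃ (i : Fin k) (r : Fin j), u = Sum.inl i ∧ v = Sum.inr (Sum.inr r)) ∨
  (∃ r s : Fin j, H.Adj r s ∧ u = Sum.inr (Sum.inr r) ∧ v = Sum.inr (Sum.inr s))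

/-- The thin spider `S_t[H,k,j]`: the body `C` is a clique of size `k`, the legs `S`
form an independent set of size `k` with `sᵢ` adjacent to `cₘ` iff `i = m`, every head
vertex is adjacent to every body vertex and to no leg, and the head induces `H`. -/
def thinSpider (k j : ℕ) (H : SimpleGraph (Fin j)) :
    SimpleGraph (Fin k ⊕ Fin k ⊕ Fin j) :=
  SimpleGraph.fromRel (thinSpiderRel k j H)

instance (k j : ℕ) (H : SimpleGraph (Fin j)) [DecidableRel H.Adj] :
    DecidableRel (thinSpiderRel k j H) := fun u v => by
  unfold thinSpiderRel; infer_instance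

instance (k j : ℕ) (H : SimpleGraph (Fin j)) [DecidableRel H.Adj] :
    DecidableRel (thinSpider k j H).Adj := fun u v =>
  inferInstanceAs (Decidable (u ≠ v ∧ (thinSpiderRel k j H u v ∨ thinSpiderRel k j H v u)))


section Aux

set_option linter.unusedSectionVars false

open Finset Matrix

lemma lap_apply {V : Type*} [Fintype V] [DecidableEq V] (G : SimpleGraph V) [DecidableRel G.Adj]
    (x : V → ℝ) (u : V) :
    (G.lapMatrix ℝ *ᵥ x) u = ∑ v, if G.Adj u v then x u - x v else 0 := by
  rw [SimpleGraph.lapMatrix_mulVec_apply]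
  simp_rw [← SimpleGraph.mem_neighborFinset, Finset.sum_ite_mem, Finset.univ_inter,
    Finset.sum_sub_distrib, Finset.sum_const, nsmul_eq_mul, SimpleGraph.degree]

variable {k j : ℕ} {H : SimpleGraph (Fin j)} [DecidableRel H.Adj]

lemma ts_adj_ll (i m : Fin k) :
    (thinSpider k j H).Adj (Sum.inl i) (Sum.inl m) ↔ i ≠ m := by
  simp [thinSpider, thinSpiderRel, SimpleGraph.fromRel_adj]

lemma ts_adj_ls (i m : Fin k) :
    (thinSpider k j H).Adj (Sum.inl i) (Sum.inr (Sum.inl m)) ↔ i = m := by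
  simp [thinSpider, thinSpiderRel, SimpleGraph.fromRel_adj]
  tauto

lemma ts_adj_lr (i : Fin k) (r : Fin j) :
    (thinSpider k j H).Adj (Sum.inl i) (Sum.inr (Sum.inr r)) := by
  simp [thinSpider, thinSpiderRel, SimpleGraph.fromRel_adj]

lemma ts_adj_sl (i m : Fin k) :
    (thinSpider k j H).Adj (Sum.inr (Sum.inl i)) (Sum.inl m) ↔ i = m := by
  rw [SimpleGraph.adj_comm, ts_adj_ls]; tauto

lemma ts_adj_rl (r : Fin j) (m : Fin k) :
    (thinSpider k j H).Adj (Sum.inr (Sum.inr r)) (Sum.inl m) := by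
  rw [SimpleGraph.adj_comm]; exact ts_adj_lr m r

lemma ts_adj_ss (i m : Fin k) :
    ¬ (thinSpider k j H).Adj (Sum.inr (Sum.inl i)) (Sum.inr (Sum.inl m)) := by
  simp [thinSpider, thinSpiderRel, SimpleGraph.fromRel_adj]

lemma ts_adj_sr (i : Fin k) (r : Fin j) :
    ¬ (thinSpider k j H).Adj (Sum.inr (Sum.inl i)) (Sum.inr (Sum.inr r)) := by
  simp [thinSpider, thinSpiderRel, SimpleGraph.fromRel_adj]

lemma ts_adj_rs (r : Fin j) (i : Fin k) :
    ¬ (thinSpider k j H).Adj (Sum.inr (Sum.inr r)) (Sum.inr (Sum.inl i)) := by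
  rw [SimpleGraph.adj_comm]; exact ts_adj_sr i r

lemma ts_adj_rr (r s : Fin j) :
    (thinSpider k j H).Adj (Sum.inr (Sum.inr r)) (Sum.inr (Sum.inr s)) ↔ H.Adj r s := by
  unfold thinSpider thinSpiderRel
  rw [SimpleGraph.fromRel_adj]
  constructor
  · rintro ⟨hne, h | h⟩ <;>
      rcases h with ⟨a, c, ha, hc⟩ | ⟨a, ha, hc⟩ | ⟨a, c, ha, hc⟩ | ⟨a, c, hac, ha, hc⟩ <;>
      simp_all <;> exact hac.symm
  · intro h
    exact ⟨fun e => H.loopless.irrefl r ((Sum.inr_injective (Sum.inr_injective e)) ▸ h),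
      Or.inl (Or.inr (Or.inr (Or.inr ⟨r, s, h, rfl, rfl⟩)))⟩

/-- The candidate eigenvector. -/
def spiderVec (k j : ℕ) (μ : ℝ) (b : Fin k → ℝ) : Fin k ⊕ Fin k ⊕ Fin j → ℝ :=
  Sum.elim (fun i => (1 - μ) * b i) (Sum.elim b fun _ => 0)

lemma spiderVec_eig (μ : ℝ) (hμ : μ ^ 2 - ((k : ℝ) + j + 2) * μ + ((k : ℝ) + j) = 0)
    (b : Fin k → ℝ) (hb : ∑ i, b i = 0) :
    (thinSpider k j H).lapMatrix ℝ *ᵥ spiderVec k j μ b = μ • spiderVec k j μ b := by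
  funext u
  rw [Pi.smul_apply, smul_eq_mul, lap_apply, Fintype.sum_sum_type, Fintype.sum_sum_type]
  obtain i | i | r := u
  · have h1 : ∀ m : Fin k, (if (thinSpider k j H).Adj (Sum.inl i) (Sum.inl m) then
        spiderVec k j μ b (Sum.inl i) - spiderVec k j μ b (Sum.inl m) else 0)
        = (1 - μ) * b i - (1 - μ) * b m := by
      intro m
      by_cases h : i = m
      · subst h
        rw [if_neg fun hh => (ts_adj_ll i i).mp hh rfl, sub_self]
      · rw [if_pos ((ts_adj_ll i m).mpr h)]; simp [spiderVec]
    rw [Finset.sum_congr rfl fun m _ => h1 m]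
    simp only [ts_adj_ls, ts_adj_lr, if_true]
    rw [Finset.sum_ite_eq]
    simp only [Finset.mem_univ, if_true, spiderVec, Sum.elim_inl, Sum.elim_inr,
      Finset.sum_sub_distrib, Finset.sum_const, Finset.card_univ, Fintype.card_fin,
      nsmul_eq_mul, ← Finset.mul_sum, hb]
    ring_nf
    linear_combination b i * hμ
  · simp only [ts_adj_sl, ts_adj_ss, ts_adj_sr, if_false, Finset.sum_const_zero]
    rw [Finset.sum_ite_eq]
    simp only [Finset.mem_univ, if_true, spiderVec, Sum.elim_inl, Sum.elim_inr, add_zero]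
    ring
  · simp only [ts_adj_rl, ts_adj_rs, ts_adj_rr, if_true, if_false, Finset.sum_const_zero,
      spiderVec, Sum.elim_inl, Sum.elim_inr]
    have : ∀ s : Fin j, (if H.Adj r s then (0:ℝ) - 0 else 0) = 0 := by intro s; split <;> ring
    simp only [this, Finset.sum_const_zero, add_zero, zero_sub, Finset.sum_neg_distrib,
      ← Finset.mul_sum, hb, mul_zero, neg_zero]
    simp

/-- `spiderVec` as a linear map in `b`. -/
def spiderVecLM (k j : ℕ) (μ : ℝ) : (Fin k → ℝ) →ₗ[ℝ] (Fin k ⊕ Fin k ⊕ Fin j → ℝ) where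
  toFun := spiderVec k j μ
  map_add' b c := by funext u; obtain i | i | r := u <;> simp [spiderVec] <;> ring
  map_smul' t b := by funext u; obtain i | i | r := u <;> simp [spiderVec] <;> ring

/-- Coordinate sum as a linear map. -/
def sumLM (k : ℕ) : (Fin k → ℝ) →ₗ[ℝ] ℝ where
  toFun b := ∑ i, b i
  map_add' b c := by simp [Finset.sum_add_distrib]
  map_smul' t b := by simp [Finset.mul_sum]

end Aux

/-- For any thin spider `S_t[H,k,j]` with `k ≥ 2` and arbitrary head graph `H`,
the numbers `(k+j+2 ± √((k+j)²+4))/2` are Laplacian eigenvalues, each with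
multiplicity (eigenspace dimension) at least `k-1`. -/
theorem thinSpider_lapMatrix_eigenvalues (k j : ℕ) (hk : 2 ≤ k)
    (H : SimpleGraph (Fin j)) [DecidableRel H.Adj] :
    ∀ μ ∈ ({((k : ℝ) + (j : ℝ) + 2 - Real.sqrt (((k : ℝ) + (j : ℝ)) ^ 2 + 4)) / 2,
            ((k : ℝ) + (j : ℝ) + 2 + Real.sqrt (((k : ℝ) + (j : ℝ)) ^ 2 + 4)) / 2} : Set ℝ),
      Module.End.HasEigenvalue (Matrix.toLin' ((thinSpider k j H).lapMatrix ℝ)) μ ∧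
      k - 1 ≤ Module.finrank ℝ
        (Module.End.eigenspace (Matrix.toLin' ((thinSpider k j H).lapMatrix ℝ)) μ) := by
  intro μ hμmem
  have hS : (0:ℝ) ≤ ((k:ℝ) + (j:ℝ)) ^ 2 + 4 := by positivity
  have hsq := Real.sq_sqrt hS
  have hμ : μ ^ 2 - ((k : ℝ) + j + 2) * μ + ((k : ℝ) + j) = 0 := by
    simp only [Set.mem_insert_iff, Set.mem_singleton_iff] at hμmem
    rcases hμmem with h | h <;> subst h <;> linear_combination hsq / 4
  set T := Matrix.toLin' ((thinSpider k j H).lapMatrix ℝ) with hT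
  have hmem : ∀ b ∈ LinearMap.ker (sumLM k), spiderVec k j μ b ∈ Module.End.eigenspace T μ := by
    intro b hb
    rw [Module.End.mem_eigenspace_iff, hT, Matrix.toLin'_apply]
    exact spiderVec_eig μ hμ b hb
  let g : LinearMap.ker (sumLM k) →ₗ[ℝ] Module.End.eigenspace T μ :=
    LinearMap.codRestrict _ ((spiderVecLM k j μ).comp (Submodule.subtype _))
      (fun b => hmem b b.2)
  have hg : Function.Injective g := by
    intro b1 b2 hb
    have hval : spiderVec k j μ (b1 : Fin k → ℝ) = spiderVec k j μ (b2 : Fin k → ℝ) :=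
      congrArg Subtype.val hb
    apply Subtype.ext
    funext i
    have := congrFun hval (Sum.inr (Sum.inl i))
    simpa [spiderVec] using this
  have hker : Module.finrank ℝ (LinearMap.ker (sumLM k)) = k - 1 := by
    have h1 := LinearMap.finrank_range_add_finrank_ker (sumLM k)
    have hsur : Function.Surjective (sumLM k) := fun x =>
      ⟨Pi.single ⟨0, by omega⟩ x, by simp [sumLM, Pi.single_apply]⟩
    rw [LinearMap.range_eq_top.mpr hsur, finrank_top,
      Module.finrank_fintype_fun_eq_card, Module.finrank_self, Fintype.card_fin] at h1
    omega
  have hle := LinearMap.finrank_le_finrank_of_injective hg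
  rw [hker] at hle
  refine ⟨?_, hle⟩
  rw [Module.End.hasEigenvalue_iff]
  intro hbot
  rw [hbot, finrank_bot] at hle
  omega
end

section
/- Let j ≥ 1 and let G be a graph whose vertex set partitions into D = {a,b,c,d,e} and a nonempty set R with |R| = j such that: the edges inside D are exactly ae, bc, bd, cd, ce, de (so D induces the graph F_6, the complement of F_3); every vertex of R is adjacent to each of c, d, e and to neither a nor b; and the edges inside R are arbitrary. Then G is not L-integral. -/
open SimpleGraph Polynomial
open Matrix Finset

/-- A finite simple graph is `L`-integral if every eigenvalue of its Laplacian
matrix (over `ℝ`) is an integer. -/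
def LIntegral {V : Type*} [Fintype V] [DecidableEq V] (G : SimpleGraph V)
    [DecidableRel G.Adj] : Prop :=
  ∀ μ ∈ spectrum ℝ (G.lapMatrix ℝ), ∃ z : ℤ, μ = (z : ℝ)

/-- The graph obtained from `F₆` (vertices `a,b,c,d,e = 0,1,2,3,4`, edges
`ae, bc, bd, cd, ce, de`; the complement of `F₃`) by adding a nonempty set `R` of
vertices, each adjacent exactly to `c`, `d` and `e`, with the edges inside `R`
given by `H`. -/
def F6Ext (j : ℕ) (H : SimpleGraph (Fin j)) : SimpleGraph (Fin 5 ⊕ Fin j) :=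
  SimpleGraph.fromRel (fun u v =>
    (u = Sum.inl 0 ∧ v = Sum.inl 4) ∨ (u = Sum.inl 1 ∧ v = Sum.inl 2) ∨
    (u = Sum.inl 1 ∧ v = Sum.inl 3) ∨ (u = Sum.inl 2 ∧ v = Sum.inl 3) ∨
    (u = Sum.inl 2 ∧ v = Sum.inl 4) ∨ (u = Sum.inl 3 ∧ v = Sum.inl 4) ∨
    (∃ r : Fin j, (u = Sum.inl 2 ∨ u = Sum.inl 3 ∨ u = Sum.inl 4) ∧ v = Sum.inr r) ∨
    (∃ r s : Fin j, H.Adj r s ∧ u = Sum.inr r ∧ v = Sum.inr s))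

/-- The Laplacian acting on a vector, written as a sum of differences over neighbours. -/
lemma lap_mulVec {V : Type*} [Fintype V] [DecidableEq V] (G : SimpleGraph V)
    [DecidableRel G.Adj] (x : V → ℝ) (v : V) :
    (G.lapMatrix ℝ *ᵥ x) v = ∑ u, if G.Adj v u then x v - x u else 0 := by
  rw [SimpleGraph.lapMatrix_mulVec_apply, SimpleGraph.neighborFinset_eq_filter,
    Finset.sum_filter, SimpleGraph.degree_eq_sum_if_adj, Finset.sum_mul,
    ← Finset.sum_sub_distrib]
  exact Finset.sum_congr rfl fun u _ => by split_ifs <;> simp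

/-- Determinant of the key 5×5 matrix. -/
lemma detcalc (μ c : ℝ) :
    (!![μ-1, 0, 0, 1, 0;
       0, μ-2, 2, 0, 0;
       0, 1, μ-(2+c), 1, c;
       1, 0, 2, μ-(3+c), c;
       0, 0, 2, 1, μ-3] : Matrix (Fin 5) (Fin 5) ℝ).det
    = μ^5 - (11+2*c)*μ^4 + (42+14*c+c^2)*μ^3 - (64+28*c+3*c^2)*μ^2 + (30+16*c+2*c^2)*μ := by
  simp [Matrix.det_succ_row_zero, Fin.sum_univ_succ, Fin.succAbove]
  ring

/-- A graph consisting of `F₆` together with a nonempty set of extra vertices, each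
adjacent exactly to `c`, `d` and `e`, is not `L`-integral. -/
theorem F6Ext_not_LIntegral {V : Type*} [Fintype V] [DecidableEq V]
    (G : SimpleGraph V) [DecidableRel G.Adj] (j : ℕ) (hj : 1 ≤ j)
    (H : SimpleGraph (Fin j)) (h : Nonempty (G ≃g F6Ext j H)) :
    ¬ LIntegral G := by
  classical
  intro hLI
  obtain ⟨φ⟩ := h
  have hj1 : (1:ℝ) ≤ (j:ℝ) := by exact_mod_cast hj
  set c : ℝ := (j : ℝ) with hc
  set p : ℝ → ℝ := fun t =>
    t^5 - (11+2*c)*t^4 + (42+14*c+c^2)*t^3 - (64+28*c+3*c^2)*t^2 + (30+16*c+2*c^2)*t with hp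
  have hcont : ContinuousOn p (Set.Icc 2 3) := by fun_prop
  have hp2 : p 2 < 0 := by
    have : p 2 = -4 := by simp only [hp]; ring
    rw [this]; norm_num
  have hp3 : 0 < p 3 := by
    have : p 3 = 6*c^2 + 12*c := by simp only [hp]; ring
    rw [this]; nlinarith
  obtain ⟨μ, hμmem, hμ⟩ :=
    (intermediate_value_Ioo (by norm_num : (2:ℝ) ≤ 3) hcont) ⟨hp2, hp3⟩
  obtain ⟨hμ2, hμ3⟩ := hμmem
  -- the 5×5 matrix μ•1 - M for the invariant subspace
  set A : Matrix (Fin 5) (Fin 5) ℝ :=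
    !![μ-1, 0, 0, 1, 0;
       0, μ-2, 2, 0, 0;
       0, 1, μ-(2+c), 1, c;
       1, 0, 2, μ-(3+c), c;
       0, 0, 2, 1, μ-3] with hA
  have hdet : A.det = 0 := by
    rw [hA, detcalc]
    simpa [hp] using hμ
  obtain ⟨w, hw0, hww⟩ := Matrix.exists_mulVec_eq_zero_iff.mpr hdet
  have e0 := congrFun hww 0
  have e1 := congrFun hww 1
  have e2 := congrFun hww 2
  have e3 := congrFun hww 3
  have e4 := congrFun hww 4
  simp [hA, Matrix.mulVec, dotProduct, Fin.sum_univ_five] at e0 e1 e2 e3 e4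
  -- eigenvector on the big graph
  set F := F6Ext j H with hF
  set x : Fin 5 ⊕ Fin j → ℝ := Sum.elim ![w 0, w 1, w 2, w 2, w 3] (fun _ => w 4) with hx
  have hFx : ∀ v, (F.lapMatrix ℝ *ᵥ x) v = μ * x v := by
    intro v
    rw [lap_mulVec]
    rcases v with i | r
    · fin_cases i <;>
      · rw [Fintype.sum_sum_type]
        simp only [hx, hF, F6Ext, SimpleGraph.fromRel_adj, Fin.sum_univ_five]
        simp [Finset.sum_const, Finset.card_univ, nsmul_eq_mul]
        first
          | linear_combination (-1 : ℝ) * e0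
          | linear_combination (-1 : ℝ) * e1
          | linear_combination (-1 : ℝ) * e2
          | linear_combination (-1 : ℝ) * e3
    · rw [Fintype.sum_sum_type]
      simp only [hx, hF, F6Ext, SimpleGraph.fromRel_adj, Fin.sum_univ_five]
      simp
      linear_combination (-1 : ℝ) * e4
  have hxne : x ≠ 0 := by
    intro h0
    apply hw0
    have h0' : ∀ v, x v = 0 := fun v => congrFun h0 v
    funext i
    fin_cases i
    · simpa [hx] using h0' (Sum.inl 0)
    · simpa [hx] using h0' (Sum.inl 1)
    · simpa [hx] using h0' (Sum.inl 2)
    · simpa [hx] using h0' (Sum.inl 4)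
    · simpa [hx] using h0' (Sum.inr ⟨0, hj⟩)
  set y : V → ℝ := fun v => x (φ v) with hy
  have hyne : y ≠ 0 := by
    intro h0
    apply hxne
    funext v
    have := congrFun h0 (φ.symm v)
    simpa [hy] using this
  have hGy : ∀ v, (G.lapMatrix ℝ *ᵥ y) v = μ * y v := by
    intro v
    rw [lap_mulVec]
    have key := hFx (φ v)
    rw [lap_mulVec] at key
    calc ∑ u, ite (G.Adj v u) (y v - y u) 0
        = ∑ u, ite (F.Adj (φ v) (φ u)) (x (φ v) - x (φ u)) 0 := by
          refine Finset.sum_congr rfl fun u _ => ?_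
          simp only [hy]
          congr 1
          exact propext φ.map_adj_iff.symm
      _ = ∑ u', ite (F.Adj (φ v) u') (x (φ v) - x u') 0 :=
          Equiv.sum_comp φ.toEquiv (fun u' => ite (F.Adj (φ v) u') (x (φ v) - x u') 0)
      _ = μ * y v := key
  have hspec : μ ∈ spectrum ℝ (G.lapMatrix ℝ) := by
    rw [spectrum.mem_iff]
    intro hU
    rw [Matrix.isUnit_iff_isUnit_det, isUnit_iff_ne_zero] at hU
    apply hU
    rw [← Matrix.exists_mulVec_eq_zero_iff]
    refine ⟨y, hyne, ?_⟩
    have halg : algebraMap ℝ (Matrix V V ℝ) μ = μ • 1 := Algebra.algebraMap_eq_smul_one μ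
    rw [halg, Matrix.sub_mulVec, Matrix.smul_mulVec, Matrix.one_mulVec]
    funext v
    simp [hGy v]
  obtain ⟨z, hz⟩ := hLI μ hspec
  rw [hz] at hμ2 hμ3
  have h2 : (2:ℤ) < z := by exact_mod_cast hμ2
  have h3 : z < 3 := by exact_mod_cast hμ3
  omega
end
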